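/- arXiv:1802.09457 — 4 statements merged into one kernel-verified Lean document; each statement's English description precedes it below -/
import Mathlib

section
/- Let A be a ring and let Γ : Mod(A) → Mod(A) be an additive left-exact functor equipped with a natural transformation σ : Γ → id such that each σ_M : Γ(M) → M is injective (so Γ(M) is naturally a submodule of M), Γ(Γ(M)) = Γ(M) for all M, and Γ(M/Γ(M)) = 0 for all M (i.e. Γ is the torsion functor of a hereditary torsion class). If the right derived functors R^iΓ vanish for all i ≥ 2 (Γ has right cohomological dimension at most one), then for every injective left A-module E one has R^iΓ(Γ(E)) = 0 for all i ≥ 1; that is, Γ(E) is right Γ-acyclic for every injective E, so the torsion class is weakly stable. -/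
/-!
For injective `E`, splicing `0 → Γ E → E → E / Γ E → 0` with an injective resolution `I` of
`E / Γ E` gives an injective resolution `E → I⁰ → I¹ → ⋯` of `Γ E`. After applying `Γ`, the map
`Γ E → Γ I⁰` factors through `Γ (E / Γ E) = 0`, while `Γ I⁰ → Γ I¹` is a monomorphism since by
left exactness its kernel is again `Γ (E / Γ E) = 0`. Hence `R¹Γ (Γ E) = 0`, and the higher
derived functors vanish by assumption.
-/

open CategoryTheory CategoryTheory.Limits

universe u

namespace CategoryTheory

variable {C : Type*} [Category C] [Abelian C]

namespace ShortComplex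

variable {S : ShortComplex C}

lemma Exact.of_epi_comp_f (hS : S.Exact) {X : C} (e : X ⟶ S.X₁) [Epi e] {f : X ⟶ S.X₂}
    (hf : e ≫ S.f = f) :
    (ShortComplex.mk f S.g (by rw [← hf, Category.assoc, S.zero, comp_zero])).Exact :=
  (exact_iff_of_epi_of_isIso_of_mono (S₁ := ShortComplex.mk f S.g _) (S₂ := S)
    { τ₁ := e, τ₂ := 𝟙 _, τ₃ := 𝟙 _, comm₁₂ := by simp [hf] }).2 hS

lemma Exact.of_g_comp_mono (hS : S.Exact) {X : C} (m : S.X₃ ⟶ X) [Mono m] {g : S.X₂ ⟶ X}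
    (hg : S.g ≫ m = g) :
    (ShortComplex.mk S.f g (by rw [← hg, S.zero_assoc, zero_comp])).Exact :=
  (exact_iff_of_epi_of_isIso_of_mono (S₁ := S) (S₂ := ShortComplex.mk S.f g _)
    { τ₁ := 𝟙 _, τ₂ := 𝟙 _, τ₃ := m, comm₂₃ := by simp [hg] }).1 hS

end ShortComplex

namespace InjectiveResolution

section

variable {Y Z : C} (I : InjectiveResolution Z) (g : Y ⟶ Z)

def augmentCocomplex : CochainComplex C ℕ :=
  I.cocomplex.augment (g ≫ I.ι.f 0)
    ((Category.assoc _ _ _).trans ((g ≫= I.ι_f_zero_comp_complex_d).trans comp_zero))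

lemma augmentCocomplex_exactAt_succ [Epi g] (n : ℕ) :
    (I.augmentCocomplex g).ExactAt (n + 1) := by
  rw [HomologicalComplex.exactAt_iff' _ n (n + 1) (n + 2) (by simp) (by simp)]
  cases n with
  | zero =>
    -- `I.ι.f 0` has source `((single₀ C).obj Z).X 0`, which instance search does not unfold to `Z`.
    have hI : (ShortComplex.mk (X₁ := Z) _ _ I.ι_f_zero_comp_complex_d).Exact := I.exact₀
    exact hI.of_epi_comp_f g rfl
  | succ n => exact I.exact_succ n

end

noncomputable def ofShortExact {S : ShortComplex C} (hS : S.ShortExact) [Injective S.X₂]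
    (I : InjectiveResolution S.X₃) : InjectiveResolution S.X₁ where
  cocomplex := I.augmentCocomplex S.g
  injective
    | 0 => ‹Injective S.X₂›
    | n + 1 => I.injective n
  ι := (CochainComplex.fromSingle₀Equiv _ _).symm ⟨S.f, (S.zero_assoc _).trans zero_comp⟩
  quasiIso := ⟨fun n => by
    cases n with
    | zero =>
      rw [CochainComplex.quasiIsoAt₀_iff, ShortComplex.quasiIso_iff_of_zeros]
      · have : @Mono _ _ S.X₃ (I.cocomplex.X 0) (I.ι.f 0) := inferInstanceAs (Mono (I.ι.f 0))
        refine (ShortComplex.exact_and_mono_f_iff_of_iso ?_).2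
          ⟨hS.exact.of_g_comp_mono (I.ι.f 0) rfl, hS.mono_f⟩
        refine ShortComplex.isoMk (Iso.refl _) (Iso.refl _) (Iso.refl _) ?_ ?_
        · dsimp; erw [Category.id_comp, Category.comp_id]
          exact (CochainComplex.fromSingle₀Equiv_symm_apply_f_zero
            (C := I.augmentCocomplex S.g) _ _).symm
        · dsimp; erw [Category.id_comp, Category.comp_id]; rfl
      all_goals rfl
    | succ n =>
      have := hS.epi_g
      rw [quasiIsoAt_iff_exactAt _ _ (CochainComplex.exactAt_succ_single_obj _ _)]
      exact I.augmentCocomplex_exactAt_succ S.g n⟩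

end InjectiveResolution

lemma Functor.isZero_rightDerived_one_of_shortExact {D : Type*} [Category D] [Abelian D]
    [HasInjectiveResolutions C] (F : C ⥤ D) [F.Additive] [PreservesFiniteLimits F]
    {S : ShortComplex C} (hS : S.ShortExact) [Injective S.X₂] [Epi (F.map S.g)] :
    IsZero ((F.rightDerived 1).obj S.X₁) := by
  let J := injectiveResolution S.X₃
  let I := InjectiveResolution.ofShortExact hS J
  refine IsZero.of_iso ?_ (I.isoRightDerivedObj F 1)
  refine (((F.mapHomologicalComplex _).obj I.cocomplex).exactAt_iff_isZero_homology 1).1 ?_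
  rw [HomologicalComplex.exactAt_iff' _ 0 1 2 (by simp) (by simp)]
  have hJ : (ShortComplex.mk (X₁ := S.X₃) _ _ J.ι_f_zero_comp_complex_d).Exact := J.exact₀
  have hFJ : (ShortComplex.mk (X₁ := F.obj S.X₃) _ _ ((F.map_comp _ _).symm.trans
      ((F.congr_map J.ι_f_zero_comp_complex_d).trans (F.map_zero _ _)))).Exact :=
    hJ.map_of_mono_of_preservesKernel F (inferInstanceAs (Mono (J.ι.f 0))) inferInstance
  exact hFJ.of_epi_comp_f (F.map S.g) (F.map_comp _ _).symm

end CategoryTheory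

theorem torsion_functor_cohomological_dimension_le_one_weakly_stable_general
    (A : Type u) [Ring A]
    (Γ : ModuleCat.{u} A ⥤ ModuleCat.{u} A) [Γ.Additive]
    [PreservesFiniteLimits Γ]
    (σ : Γ ⟶ 𝟭 (ModuleCat.{u} A))
    (hmono : ∀ M : ModuleCat.{u} A, Mono (σ.app M))
    (hrad : ∀ M : ModuleCat.{u} A, IsZero (Γ.obj (cokernel (σ.app M))))
    (hdim : ∀ i : ℕ, 2 ≤ i → ∀ M : ModuleCat.{u} A, IsZero ((Γ.rightDerived i).obj M)) :
    ∀ E : ModuleCat.{u} A, Injective E →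
      ∀ i : ℕ, 1 ≤ i → IsZero ((Γ.rightDerived i).obj (Γ.obj E)) := by
  intro E hE i hi
  obtain rfl | hi := hi.eq_or_lt
  · have := hmono E
    have hS : (ShortComplex.mk _ _ (cokernel.condition (σ.app E))).ShortExact :=
      { exact := ShortComplex.exact_cokernel _ }
    have := (hrad E).epi (Γ.map (cokernel.π (σ.app E)))
    exact Γ.isZero_rightDerived_one_of_shortExact hS
  · exact hdim i hi _

/-- Let `A` be a ring and `Γ : Mod(A) ⥤ Mod(A)` an additive left-exact functor together with
a natural transformation `σ : Γ ⟶ 𝟭` such that each `σ.app M` is a monomorphism (so `Γ M` is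
naturally a submodule of `M`), `Γ (Γ M) = Γ M` (the inclusion `Γ (Γ M) ⟶ Γ M` is an
isomorphism) and `Γ (M / Γ M) = 0` (i.e. `Γ` applied to the cokernel of `σ.app M` is zero):
`Γ` is the torsion functor of a hereditary torsion class.  If `R^i Γ = 0` for all `i ≥ 2`
(right cohomological dimension at most one), then for every injective module `E` one has
`R^i Γ (Γ E) = 0` for all `i ≥ 1`: the torsion class is weakly stable. -/
theorem torsion_functor_cohomological_dimension_le_one_weakly_stable
    (A : Type u) [Ring A]
    (Γ : ModuleCat.{u} A ⥤ ModuleCat.{u} A) [Γ.Additive]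
    [PreservesFiniteLimits Γ]
    (σ : Γ ⟶ 𝟭 (ModuleCat.{u} A))
    (hmono : ∀ M : ModuleCat.{u} A, Mono (σ.app M))
    (hidem : ∀ M : ModuleCat.{u} A, IsIso (σ.app (Γ.obj M)))
    (hrad : ∀ M : ModuleCat.{u} A, IsZero (Γ.obj (cokernel (σ.app M))))
    (hdim : ∀ i : ℕ, 2 ≤ i → ∀ M : ModuleCat.{u} A, IsZero ((Γ.rightDerived i).obj M)) :
    ∀ E : ModuleCat.{u} A, Injective E →
      ∀ i : ℕ, 1 ≤ i → IsZero ((Γ.rightDerived i).obj (Γ.obj E)) :=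
  torsion_functor_cohomological_dimension_le_one_weakly_stable_general A Γ σ hmono hrad hdim
end

section
/- Let A be a ring and S a left denominator set in A. For every left A-module M, the Ore localization M_S, viewed as a left A-module via restriction along A → A_S, satisfies Γ_S(M_S) = 0 and R^iΓ_S(M_S) = 0 for all i ≥ 1; that is, M_S is S-torsion-free and right Γ_S-acyclic. -/
open CategoryTheory CategoryTheory.Limits OreLocalization

universe u
variable {A : Type u} [Ring A] (S : Submonoid A) [OreSet S]

/-- The `S`-torsion submodule of a module `M`: elements annihilated by some `s ∈ S`. -/
def oreTorsion (M : Type u) [AddCommGroup M] [Module A M] : Submodule A M where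
  carrier := {m : M | ∃ s ∈ S, s • m = 0}
  zero_mem' := ⟨1, S.one_mem, smul_zero _⟩
  add_mem' := by
    rintro x y ⟨a, ha, hax⟩ ⟨b, hb, hby⟩
    refine ⟨(oreDenom b ⟨a, ha⟩ : A) * b, S.mul_mem (oreDenom b ⟨a, ha⟩).2 hb, ?_⟩
    have h := ore_eq b (⟨a, ha⟩ : S)
    have h1 : ((oreDenom b ⟨a, ha⟩ : A) * b) • x = 0 := by
      rw [h, mul_smul, hax, smul_zero]
    have h2 : ((oreDenom b ⟨a, ha⟩ : A) * b) • y = 0 := by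
      rw [mul_smul, hby, smul_zero]
    rw [smul_add, h1, h2, add_zero]
  smul_mem' := by
    rintro c x ⟨a, ha, hax⟩
    refine ⟨(oreDenom c ⟨a, ha⟩ : A), (oreDenom c ⟨a, ha⟩).2, ?_⟩
    have h := ore_eq c (⟨a, ha⟩ : S)
    rw [← mul_smul, h, mul_smul, hax, smul_zero]

/-- The `S`-torsion functor `Γ_S`. -/
def oreTorsionFunctor : ModuleCat.{u} A ⥤ ModuleCat.{u} A where
  obj M := ModuleCat.of A (oreTorsion S M)
  map {M N} f := ModuleCat.ofHom (LinearMap.restrict f.hom (p := oreTorsion S M) (q := oreTorsion S N)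
    (fun x hx => by
      obtain ⟨a, ha, hax⟩ := hx
      exact ⟨a, ha, by rw [← map_smul, hax, map_zero]⟩))
  map_id M := by ext x; rfl
  map_comp f g := by ext x; rfl

instance : (oreTorsionFunctor S).Additive where
  map_add := by intros; ext x; rfl

/-- The canonical localization map `M → M_S`. -/
def oreLocMap (M : Type u) [AddCommGroup M] [Module A M] : M →ₗ[A] OreLocalization S M where
  toFun m := m /ₒ (1 : S)
  map_add' _ _ := add_oreDiv.symm
  map_smul' r m := (smul_oreDiv_one r m).symm

/-! Elements of `S` act invertibly on any `A[S⁻¹]`-module, so such a module is `S`-torsion-free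
as an `A`-module; `M_S` is one of them. Ore localization `M ↦ M[S⁻¹]` is exact and left adjoint
to restriction of scalars along `A → A[S⁻¹]`, so restriction preserves injectives and carries an
injective resolution of `M_S` over `A[S⁻¹]` to one over `A`. Every term of the latter is
`S`-torsion-free, so `Γ_S` kills the whole resolution and all `R^iΓ_S(M_S)` vanish. -/

section OreLocalizationModules

variable {S}

lemma smul_eq_oreDiv_one_smul {N : Type u} [AddCommGroup N] [Module A N] [Module A[S⁻¹] N]
    [IsScalarTower A A[S⁻¹] N] (a : A) (x : N) : a • x = (a /ₒ (1 : S)) • x := by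
  rw [← smul_one_smul A[S⁻¹] a x, ← oreDiv_one_smul a (1 : A[S⁻¹]), smul_eq_mul, mul_one]

lemma one_oreDiv_smul_oreDiv_one {M : Type u} [AddCommGroup M] [Module A M] (x : M) (s : S) :
    ((1 : A) /ₒ s) • (x /ₒ (1 : S)) = x /ₒ s := by
  rw [OreLocalization.smul_div_one, one_smul]

instance (J : ModuleCat.{u} A[S⁻¹]) :
    IsScalarTower A A[S⁻¹] ((ModuleCat.restrictScalars.{u} numeratorRingHom).obj J) where
  smul_assoc a b x := by
    rw [ModuleCat.restrictScalars.smul_def, ← oreDiv_one_smul a b, smul_eq_mul, mul_smul]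
    rfl

lemma oreTorsion_eq_bot_of_isScalarTower (N : Type u) [AddCommGroup N] [Module A N]
    [Module A[S⁻¹] N] [IsScalarTower A A[S⁻¹] N] : oreTorsion S N = ⊥ := by
  refine eq_bot_iff.mpr fun x ⟨s, hs, hsx⟩ => ?_
  calc x = ((1 : A) /ₒ (⟨s, hs⟩ : S) * (s /ₒ (1 : S))) • x := by
        rw [← Submonoid.coe_one S, OreLocalization.mul_inv, one_smul]
    _ = 0 := by rw [mul_smul, ← smul_eq_oreDiv_one_smul, hsx, smul_zero]

variable {M N J : Type u} [AddCommGroup M] [Module A M] [AddCommGroup N] [Module A N]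
  [AddCommGroup J] [Module A J] [Module A[S⁻¹] J] [IsScalarTower A A[S⁻¹] J]

def oreLift (f : M →ₗ[A] J) : OreLocalization S M →ₗ[A[S⁻¹]] J where
  toFun := liftExpand (fun m s => ((1 : A) /ₒ s) • f m) fun m t s hts => by
    rw [map_smul, smul_eq_oreDiv_one_smul (S := S) (t : A), ← mul_smul,
      OreLocalization.mul_div_one, one_mul,
      OreLocalization.expand (1 : A) s t (by simpa using hts), smul_eq_mul, mul_one]
  map_add' x y := by
    induction x with | _ m s
    induction y with | _ m' s'
    obtain ⟨r, t, hrt, hsum⟩ := oreDivAddChar' m m' s s'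
    have e₁ : ((1 : A) /ₒ s : A[S⁻¹]) = (t : A) /ₒ (t * s) := by
      simpa [Submonoid.smul_def] using OreLocalization.expand' (1 : A) s t
    have e₂ : ((1 : A) /ₒ s' : A[S⁻¹]) = r /ₒ (t * s) := by
      rw [OreLocalization.expand (1 : A) s' r (hrt ▸ (t * s).2), smul_eq_mul, mul_one]
      exact congrArg _ (Subtype.ext hrt.symm)
    rw [hsum]
    simp only [liftExpand_of]
    rw [Submonoid.smul_def, map_add, map_smul, map_smul,
      smul_eq_oreDiv_one_smul (S := S) (t : A), smul_eq_oreDiv_one_smul (S := S) r, smul_add,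
      ← mul_smul, ← mul_smul, OreLocalization.mul_div_one, OreLocalization.mul_div_one,
      one_mul, one_mul, e₁, e₂]
  map_smul' z x := by
    induction z with | _ r t
    induction x with | _ m s
    obtain ⟨r', s', hrs, hprod⟩ := oreDivSMulChar' r m t s
    rw [hprod]
    simp only [liftExpand_of, RingHom.id_apply]
    rw [map_smul, smul_eq_oreDiv_one_smul (S := S) r', ← mul_smul, ← mul_smul,
      OreLocalization.mul_div_one, one_mul, OreLocalization.oreDiv_mul_char r 1 t s r' s' hrs,
      mul_one]

@[simp]
lemma oreLift_oreDiv (f : M →ₗ[A] J) (m : M) (s : S) :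
    oreLift f (m /ₒ s) = ((1 : A) /ₒ s) • f m :=
  rfl

lemma oreLift_oreDiv_one (f : M →ₗ[A] J) (m : M) : oreLift (S := S) f (m /ₒ 1) = f m := by
  rw [oreLift_oreDiv, ← OreLocalization.one_def, one_smul]

variable (S) in
def oreLocalizationMap (g : M →ₗ[A] N) :
    OreLocalization S M →ₗ[A[S⁻¹]] OreLocalization S N :=
  oreLift (oreLocMap S N ∘ₗ g)

lemma oreLocalizationMap_oreDiv (g : M →ₗ[A] N) (m : M) (s : S) :
    oreLocalizationMap S g (m /ₒ s) = g m /ₒ s :=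
  one_oreDiv_smul_oreDiv_one (g m) s

lemma oreLocalizationMap_injective {g : M →ₗ[A] N} (hg : Function.Injective g) :
    Function.Injective (oreLocalizationMap S g) := by
  refine (injective_iff_map_eq_zero _).mpr fun x hx => ?_
  induction x with | _ m s
  rw [oreLocalizationMap_oreDiv, ← OreLocalization.zero_oreDiv s] at hx
  obtain ⟨u, v, hvm, huv⟩ := OreLocalization.oreDiv_eq_iff.mp hx
  have hvm' : v • m = 0 := hg (by rw [map_smul, ← hvm, smul_zero, map_zero])
  rw [OreLocalization.expand m s v (huv ▸ (u * s).2), hvm', OreLocalization.zero_oreDiv]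

noncomputable section

variable (S)

def isoRestrictScalarsOfIsScalarTower (N : Type u) [AddCommGroup N] [Module A N]
    [Module A[S⁻¹] N] [IsScalarTower A A[S⁻¹] N] :
    ModuleCat.of A N ≅
      (ModuleCat.restrictScalars.{u} numeratorRingHom).obj (ModuleCat.of A[S⁻¹] N) :=
  LinearEquiv.toModuleIso
    ({ AddEquiv.refl N with map_smul' := smul_eq_oreDiv_one_smul } :
      N ≃ₗ[A] (ModuleCat.restrictScalars.{u} numeratorRingHom).obj (ModuleCat.of A[S⁻¹] N))

def oreLocalizationFunctor : ModuleCat.{u} A ⥤ ModuleCat.{u} A[S⁻¹] where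
  obj M := ModuleCat.of _ (OreLocalization S M)
  map f := ModuleCat.ofHom (oreLocalizationMap S f.hom)
  map_id M := by
    ext x
    induction x using OreLocalization.ind with | _ m s
    exact oreLocalizationMap_oreDiv _ m s
  map_comp f g := by
    ext x
    induction x using OreLocalization.ind with | _ m s
    simp [oreLocalizationMap_oreDiv]

def oreLocalizationAdjunction :
    oreLocalizationFunctor S ⊣ ModuleCat.restrictScalars.{u} (numeratorRingHom (S := S)) :=
  Adjunction.mkOfHomEquiv
    { homEquiv M J :=
        { toFun k := ModuleCat.ofHom (oreLocMap S M) ≫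
            (isoRestrictScalarsOfIsScalarTower S _).hom ≫ (ModuleCat.restrictScalars _).map k
          invFun g := ModuleCat.ofHom (oreLift g.hom : OreLocalization S M →ₗ[A[S⁻¹]]
            (ModuleCat.restrictScalars.{u} numeratorRingHom).obj J)
          left_inv k := by
            ext x
            induction x using OreLocalization.ind with | _ m s
            exact (map_smul k.hom _ _).symm.trans
              (congrArg k.hom (one_oreDiv_smul_oreDiv_one m s))
          right_inv g := by
            ext m
            exact oreLift_oreDiv_one g.hom m }
      homEquiv_naturality_left_symm f g := by
        ext x
        induction x using OreLocalization.ind with | _ m s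
        change ((1 : A) /ₒ s) • g (f m) = oreLift g.hom (oreLocalizationMap S f.hom (m /ₒ s))
        rw [oreLocalizationMap_oreDiv, oreLift_oreDiv]
      homEquiv_naturality_right f g := rfl }

instance : (oreLocalizationFunctor S).PreservesMonomorphisms where
  preserves f hf := (ModuleCat.mono_iff_injective _).mpr <|
    oreLocalizationMap_injective ((ModuleCat.mono_iff_injective f).mp hf)

instance : (ModuleCat.restrictScalars.{u} (numeratorRingHom (S := S))).PreservesInjectiveObjects :=
  Functor.preservesInjectiveObjects_of_adjunction_of_preservesMonomorphisms
    (oreLocalizationAdjunction S)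

end

end OreLocalizationModules

noncomputable section

instance {R T : Type u} [Ring R] [Ring T] (f : R →+* T) :
    PreservesFiniteLimits (ModuleCat.restrictScalars.{u} f) where
  preservesFiniteLimits _ := { preservesLimit := ModuleCat.preservesLimit_restrictScalars f _ }

instance {R T : Type u} [Ring R] [Ring T] (f : R →+* T) :
    PreservesFiniteColimits (ModuleCat.restrictScalars.{u} f) where
  preservesFiniteColimits _ :=
    { preservesColimit := ModuleCat.preservesColimit_restrictScalars f _ }

def CategoryTheory.Functor.mapInjectiveResolution {C D : Type*} [Category C] [HasZeroObject C]
    [Preadditive C] [Category D] [HasZeroObject D] [Preadditive D] [CategoryWithHomology D]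
    (F : C ⥤ D) [F.Additive] [F.PreservesInjectiveObjects] [F.PreservesHomology] {Z : C}
    (I : InjectiveResolution Z) : InjectiveResolution (F.obj Z) where
  cocomplex := (F.mapHomologicalComplex _).obj I.cocomplex
  injective n := F.injective_obj_of_injective (I.injective n)
  ι := (HomologicalComplex.singleMapHomologicalComplex _ _ _).inv.app _ ≫
    (F.mapHomologicalComplex _).map I.ι
  quasiIso := inferInstance

end

lemma CategoryTheory.Functor.isZero_rightDerived_obj_of_isZero {C D : Type*} [Category C]
    [Abelian C] [HasInjectiveResolutions C] [Category D] [Abelian D] (F : C ⥤ D) [F.Additive]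
    {Z : C} (I : InjectiveResolution Z) (n : ℕ) (h : IsZero (F.obj (I.cocomplex.X n))) :
    IsZero ((F.rightDerived n).obj Z) :=
  (ShortComplex.isZero_homology_of_isZero_X₂ _ h).of_iso (I.isoRightDerivedObj F n)

lemma isZero_oreTorsionFunctor_obj_restrictScalars (J : ModuleCat.{u} A[S⁻¹]) :
    IsZero ((oreTorsionFunctor S).obj ((ModuleCat.restrictScalars.{u} numeratorRingHom).obj J)) :=
  @ModuleCat.isZero_of_subsingleton _ _ _
    (Submodule.subsingleton_iff_eq_bot.mpr (oreTorsion_eq_bot_of_isScalarTower _))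

lemma isZero_rightDerived_oreTorsionFunctor_restrictScalars (Y : ModuleCat.{u} A[S⁻¹])
    (n : ℕ) :
    IsZero (((oreTorsionFunctor S).rightDerived n).obj
      ((ModuleCat.restrictScalars.{u} numeratorRingHom).obj Y)) :=
  (oreTorsionFunctor S).isZero_rightDerived_obj_of_isZero
    ((ModuleCat.restrictScalars.{u} numeratorRingHom).mapInjectiveResolution
      (InjectiveResolution.of Y)) n
    (isZero_oreTorsionFunctor_obj_restrictScalars S _)

/-- For a left denominator set `S` in a ring `A`, the Ore localization `M_S` of any left
`A`-module `M`, viewed as a left `A`-module, is `S`-torsion-free and right `Γ_S`-acyclic: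
`Γ_S (M_S) = 0` and `R^i Γ_S (M_S) = 0` for all `i ≥ 1`. -/
theorem ore_localization_torsionfree_and_acyclic (M : Type u) [AddCommGroup M] [Module A M] :
    oreTorsion S (OreLocalization S M) = ⊥ ∧
    ∀ i : ℕ, 1 ≤ i →
      IsZero (((oreTorsionFunctor S).rightDerived i).obj
        (ModuleCat.of A (OreLocalization S M))) :=
  ⟨oreTorsion_eq_bot_of_isScalarTower _, fun i _ =>
    (isZero_rightDerived_oreTorsionFunctor_restrictScalars S _ i).of_iso
      (((oreTorsionFunctor S).rightDerived i).mapIso (isoRestrictScalarsOfIsScalarTower S _))⟩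
end

section
/- Let A be a commutative ring and 𝔞 ⊆ A an ideal. Then Tor_n^A(A/𝔞, A/𝔞) = 0 for all n ≥ 1 (i.e. 𝔞 is strongly idempotent) if and only if Ext^n_A(A/𝔞, Hom_A(A/𝔞, E)) = 0 for every injective A-module E and every n ≥ 1 (i.e. the torsion class T_𝔞 of modules annihilated by 𝔞 is weakly stable). -/
/-!
Let `P` be a projective resolution of `N`. Then `Torₙ(M, N)` vanishes iff `M ⊗ P` is exact in
degree `n`. Injective objects detect exactness, so this happens iff `Hom(M ⊗ P, E)` is exact in
degree `n` for every injective `E`, and by the tensor–hom adjunction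
`Hom(M ⊗ P, E) ≅ Hom(P, Hom(M, E))`, whose cohomology in degree `n` is `Extⁿ(N, Hom(M, E))`.
For `M = N = A/𝔞` this is the theorem.
-/

open CategoryTheory CategoryTheory.Limits MonoidalCategory Opposite

universe u

namespace CategoryTheory

variable {C : Type*} [Category* C]

def HomExactAt [HasZeroMorphisms C] {X Y Z : C} (f : X ⟶ Y) (g : Y ⟶ Z) (E : C) : Prop :=
  ∀ φ : Y ⟶ E, f ≫ φ = 0 → ∃ ψ : Z ⟶ E, g ≫ ψ = φ

lemma ShortComplex.exact_iff_forall_injective_homExactAt [Abelian C] [EnoughInjectives C]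
    (S : ShortComplex C) : S.Exact ↔ ∀ E : C, Injective E → HomExactAt S.f S.g E := by
  refine ⟨fun hS E _ φ hφ => ⟨hS.descToInjective φ hφ, hS.comp_descToInjective φ hφ⟩, fun h => ?_⟩
  rw [S.exact_iff_mono_fromOpcycles]
  obtain ⟨ψ, hψ⟩ := h _ inferInstance (S.pOpcycles ≫ Injective.ι S.opcycles) (by simp)
  have : S.fromOpcycles ≫ ψ = Injective.ι S.opcycles := by
    rw [← cancel_epi S.pOpcycles, S.p_fromOpcycles_assoc, hψ]
  exact mono_of_mono_fac this

lemma Adjunction.homExactAt_map_iff {D : Type*} [Category* D] [HasZeroMorphisms C]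
    [HasZeroMorphisms D] {F : C ⥤ D} {G : D ⥤ C} (adj : F ⊣ G) {X Y Z : C} (f : X ⟶ Y)
    (g : Y ⟶ Z) (E : D) : HomExactAt (F.map f) (F.map g) E ↔ HomExactAt f g (G.obj E) := by
  have : G.PreservesZeroMorphisms := by
    have := adj.isRightAdjoint
    infer_instance
  have hzero (W : C) : adj.homEquiv W E 0 = 0 := by
    rw [Adjunction.homEquiv_unit, Functor.map_zero, comp_zero]
  refine (adj.homEquiv Y E).forall_congr fun φ => ?_
  rw [← (adj.homEquiv X E).apply_eq_iff_eq, hzero, adj.homEquiv_naturality_left]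
  refine imp_congr_right fun _ => (adj.homEquiv Z E).exists_congr fun ψ => ?_
  rw [← adj.homEquiv_naturality_left, (adj.homEquiv Y E).apply_eq_iff_eq]

lemma _root_.ChainComplex.exactAt_linearYonedaObj_iff {α : Type*} [AddRightCancelSemigroup α]
    [One α] (R : Type*) [Ring R] [Abelian C] [Linear R C] (K : ChainComplex C α) (Y : C)
    (i : α) : (K.linearYonedaObj R Y).ExactAt i ↔ HomExactAt (K.dTo i) (K.dFrom i) Y := by
  rw [HomologicalComplex.exactAt_iff, ShortComplex.moduleCat_exact_iff]
  rfl

theorem isZero_Tor_iff_forall_injective_isZero_Ext (R : Type*) [Ring R] [Abelian C]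
    [MonoidalCategory C] [MonoidalPreadditive C] [MonoidalClosed C] [Linear R C]
    [EnoughProjectives C] [EnoughInjectives C] (M N : C) (n : ℕ) :
    IsZero (((Tor C n).obj M).obj N) ↔
      ∀ E : C, Injective E → IsZero (((Ext R C n).obj (op N)).obj ((ihom M).obj E)) := by
  obtain ⟨P⟩ : Nonempty (ProjectiveResolution N) := HasProjectiveResolution.out
  have eTor : ((Tor C n).obj M).obj N ≅
      ((((tensoringLeft C).obj M).mapHomologicalComplex _).obj P.complex).homology n :=
    P.isoLeftDerivedObj _ n
  rw [eTor.isZero_iff, ← HomologicalComplex.exactAt_iff_isZero_homology,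
    HomologicalComplex.exactAt_iff, ShortComplex.exact_iff_forall_injective_homExactAt]
  refine forall_congr' fun E => imp_congr_right fun _ => ?_
  rw [(P.isoExt n _).isZero_iff, ← HomologicalComplex.exactAt_iff_isZero_homology,
    ChainComplex.exactAt_linearYonedaObj_iff, ← (ihom.adjunction M).homExactAt_map_iff]
  rfl

end CategoryTheory

theorem ModuleCat.isZero_Tor_iff_forall_injective_isZero_Ext {R : Type u} [CommRing R]
    (M N : ModuleCat.{u} R) (n : ℕ) :
    IsZero (((Tor (ModuleCat.{u} R) n).obj M).obj N) ↔
      ∀ E : ModuleCat.{u} R, Injective E →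
        IsZero (((Ext R (ModuleCat.{u} R) n).obj (op N)).obj (ModuleCat.of R (M →ₗ[R] E))) := by
  rw [CategoryTheory.isZero_Tor_iff_forall_injective_isZero_Ext R]
  exact forall_congr' fun E => imp_congr_right fun _ =>
    (((Ext R _ n).obj (op N)).mapIso homLinearEquiv.toModuleIso).isZero_iff

/-- Let `A` be a commutative ring and `𝔞 ⊆ A` an ideal.  Then `Tor_n^A(A/𝔞, A/𝔞) = 0` for all
`n ≥ 1` (i.e. `𝔞` is strongly idempotent) if and only if
`Ext^n_A(A/𝔞, Hom_A(A/𝔞, E)) = 0` for every injective `A`-module `E` and every `n ≥ 1`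
(i.e. the torsion class `T_𝔞` of modules annihilated by `𝔞` is weakly stable). -/
theorem strongly_idempotent_iff_weakly_stable
    (A : Type u) [CommRing A] (𝔞 : Ideal A) :
    (∀ n : ℕ, 1 ≤ n →
      IsZero (((Tor (ModuleCat.{u} A) n).obj (ModuleCat.of A (A ⧸ 𝔞))).obj
        (ModuleCat.of A (A ⧸ 𝔞)))) ↔
    (∀ E : ModuleCat.{u} A, Injective E → ∀ n : ℕ, 1 ≤ n →
      IsZero (((Ext A (ModuleCat.{u} A) n).obj (Opposite.op (ModuleCat.of A (A ⧸ 𝔞)))).obj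
        (ModuleCat.of A ((A ⧸ 𝔞) →ₗ[A] E)))) := by
  simp only [ModuleCat.isZero_Tor_iff_forall_injective_isZero_Ext]
  exact ⟨fun h E hE n hn => h n hn E hE, fun h n hn E hE => h E hE n hn⟩
end

section
/- Let s be a normal and regular element of a ring A and let L be a flat left A-module. For each n ≥ 1 the set sⁿL = {sⁿ·x | x ∈ L} is an A-submodule of L. Consider the maps of abelian groups ∂ : ∏_{i∈ℕ} L → L × ∏_{i∈ℕ} L defined by ∂((m_i)_{i∈ℕ}) = (m_0, (m_i − s·m_{i+1})_{i∈ℕ}), and ω : L × ∏_{i∈ℕ} L → ∏_{n≥1} L/sⁿL whose n-th component is ω(m, (m_i))_n = ((Σ_{j=0}^{n−1} sʲ·m_j) − m) mod sⁿL. Then: (a) ∂ is injective; (b) ker ω = im ∂; (c) the image of ω is exactly the inverse limit lim_n L/sⁿL, i.e. the subgroup of sequences (x_n)_{n≥1} that are compatible under the canonical projections L/s^{n+1}L → L/sⁿL. Consequently ω induces an isomorphism coker ∂ ≅ lim_n L/sⁿL, the s-adic completion Λ_s(L). -/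
universe u

variable {A : Type u} [Ring A]

/-- If `As ⊆ sA` then `Asⁿ ⊆ sⁿA` for every `n`. -/
theorem mul_pow_ore (s : A) (hs : ∀ a : A, ∃ b, a * s = s * b) :
    ∀ (a : A) (n : ℕ), ∃ b, a * s ^ n = s ^ n * b := by
  intro a n
  induction n generalizing a with
  | zero => exact ⟨a, by simp⟩
  | succ n ih =>
    obtain ⟨b, hb⟩ := hs a
    obtain ⟨b', hb'⟩ := ih b
    exact ⟨b', by rw [pow_succ', ← mul_assoc, hb, mul_assoc, hb', ← mul_assoc]⟩

/-- For a normal element `s`, the set `sⁿL = {sⁿ • y | y ∈ L}` is an `A`-submodule of `L`. -/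
def smulPow (s : A) (hs : ∀ a : A, ∃ b, a * s = s * b)
    (L : Type u) [AddCommGroup L] [Module A L] (n : ℕ) : Submodule A L where
  carrier := {x : L | ∃ y : L, x = s ^ n • y}
  zero_mem' := ⟨0, (smul_zero _).symm⟩
  add_mem' := by
    rintro x x' ⟨y, rfl⟩ ⟨y', rfl⟩
    exact ⟨y + y', (smul_add _ _ _).symm⟩
  smul_mem' := by
    rintro c x ⟨y, rfl⟩
    obtain ⟨b, hb⟩ := mul_pow_ore s hs c n
    exact ⟨b • y, by rw [← mul_smul, hb, mul_smul]⟩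

theorem smulPow_succ_le (s : A) (hs : ∀ a : A, ∃ b, a * s = s * b)
    (L : Type u) [AddCommGroup L] [Module A L] (n : ℕ) :
    smulPow s hs L (n + 1) ≤ smulPow s hs L n := by
  rintro x ⟨y, rfl⟩
  exact ⟨s • y, by rw [pow_succ, mul_smul]⟩

/-- The map `∂ : ∏_{i∈ℕ} L → L × ∏_{i∈ℕ} L`, `(m_i) ↦ (m_0, (m_i − s • m_{i+1}))`. -/
def telD (s : A) {L : Type u} [AddCommGroup L] [Module A L] :
    (ℕ → L) → L × (ℕ → L) :=
  fun m => (m 0, fun i => m i - s • m (i + 1))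

/-- The map `ω : L × ∏_{i∈ℕ} L → ∏_{n≥1} L/sⁿL`, whose component at `n = p + 1` is
`((∑_{j=0}^{n-1} sʲ • m_j) − m) mod sⁿL`. -/
def telOmega (s : A) (hs : ∀ a : A, ∃ b, a * s = s * b)
    (L : Type u) [AddCommGroup L] [Module A L] :
    L × (ℕ → L) → ∀ p : ℕ, L ⧸ smulPow s hs L (p + 1) :=
  fun x p =>
    Submodule.Quotient.mk ((∑ j ∈ Finset.range (p + 1), s ^ j • x.2 j) - x.1)

/-- The canonical projection `L/s^{n+1}L → L/sⁿL` (with `n = p + 1`). -/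
noncomputable def telProj (s : A) (hs : ∀ a : A, ∃ b, a * s = s * b)
    (L : Type u) [AddCommGroup L] [Module A L] (p : ℕ) :
    (L ⧸ smulPow s hs L (p + 2)) →ₗ[A] (L ⧸ smulPow s hs L (p + 1)) :=
  Submodule.mapQ _ _ LinearMap.id (fun _ hx => smulPow_succ_le s hs L (p + 1) hx)

/-- Let `s` be a normal and regular element of a ring `A` and `L` a flat left `A`-module.
Each `sⁿL` is a submodule of `L`; moreover for the maps
`∂ : ∏ L → L × ∏ L`, `(m_i) ↦ (m_0, (m_i − s•m_{i+1}))`, and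
`ω : L × ∏ L → ∏_{n ≥ 1} L/sⁿL`, `ω(m, (m_i))_n = ((∑_{j<n} sʲ•m_j) − m) mod sⁿL`:
(a) `∂` is injective; (b) `ker ω = im ∂`; (c) the image of `ω` is exactly the inverse limit
`lim_n L/sⁿL`, the set of sequences compatible under the canonical projections
`L/s^{n+1}L → L/sⁿL`.  Consequently `ω` induces an isomorphism
`coker ∂ ≅ lim_n L/sⁿL = Λ_s(L)`. -/
theorem telescope_computes_completion
    (s : A)
    (hnorm₁ : ∀ a : A, ∃ b, a * s = s * b)
    (hnorm₂ : ∀ a : A, ∃ b, s * a = b * s)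
    (hreg₁ : ∀ a : A, s * a = 0 → a = 0)
    (hreg₂ : ∀ a : A, a * s = 0 → a = 0)
    (L : Type u) [AddCommGroup L] [Module A L]
    -- `L` is a flat left `A`-module; as Mathlib (at this version) has no notion of flatness
    -- over a noncommutative ring, we record flatness through its only consequence used here
    -- (see the context): multiplication by the regular element `s` is injective on `L`.
    (hflat : Function.Injective fun x : L => s • x) :
    -- `sⁿL` is a submodule, with the expected carrier
    (∀ n : ℕ, (smulPow s hnorm₁ L n : Set L) = {x : L | ∃ y : L, x = s ^ n • y}) ∧
    -- (a) `∂` is injective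
    Function.Injective (telD s (L := L)) ∧
    -- (b) `ker ω = im ∂`
    (∀ x : L × (ℕ → L), telOmega s hnorm₁ L x = 0 ↔ x ∈ Set.range (telD s (L := L))) ∧
    -- (c) the image of `ω` is the inverse limit `lim_n L/sⁿL`
    Set.range (telOmega s hnorm₁ L) =
      {x : ∀ p : ℕ, L ⧸ smulPow s hnorm₁ L (p + 1) |
        ∀ p : ℕ, telProj s hnorm₁ L p (x (p + 1)) = x p} := by
  have hpow : ∀ n : ℕ, Function.Injective fun x : L => s ^ n • x := by
    intro n
    induction n with
    | zero => intro a b h; simpa using h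
    | succ n ih =>
      intro a b h
      simp only [pow_succ', mul_smul] at h
      exact ih (hflat h)
  refine ⟨fun n => rfl, ?_, ?_, ?_⟩
  · -- (a)
    intro m m' h
    have h0 : m 0 = m' 0 := congrArg Prod.fst h
    have h1 : ∀ i, m i - s • m (i + 1) = m' i - s • m' (i + 1) := fun i =>
      congrFun (congrArg Prod.snd h) i
    funext i
    induction i with
    | zero => exact h0
    | succ i ih =>
      have h2 := h1 i
      rw [ih] at h2
      exact hflat (sub_right_injective h2)
  · -- (b)
    intro x
    constructor
    · intro h
      have hmem : ∀ p : ℕ, ∃ y : L,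
          (∑ j ∈ Finset.range (p + 1), s ^ j • x.2 j) - x.1 = s ^ (p + 1) • y :=
        fun p => (Submodule.Quotient.mk_eq_zero _).mp (congrFun h p)
      choose y hy using hmem
      refine ⟨fun i => Nat.rec x.1 (fun i _ => -y i) i, ?_⟩
      have hseq : ∀ i, x.2 i =
          (fun i => Nat.rec (motive := fun _ => L) x.1 (fun i _ => -y i) i) i
            - s • (fun i => Nat.rec (motive := fun _ => L) x.1 (fun i _ => -y i) i) (i + 1) := by
        intro i
        induction i with
        | zero =>
          have h0 := hy 0
          simp only [Finset.sum_range_one, pow_zero, one_smul, zero_add, pow_one] at h0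
          show x.2 0 = x.1 - s • (-y 0)
          rw [smul_neg, sub_neg_eq_add, ← h0]
          abel
        | succ i _ =>
          have h1 := hy (i + 1)
          have h2 := hy i
          rw [Finset.sum_range_succ] at h1
          have key : s ^ (i + 1) • (x.2 (i + 1) + y i - s • y (i + 1)) = 0 := by
            rw [smul_sub, smul_add, ← mul_smul, ← pow_succ]
            have e : s ^ (i + 1) • x.2 (i + 1)
                = s ^ (i + 1 + 1) • y (i + 1) - s ^ (i + 1) • y i := by
              rw [← h1, ← h2]; abel
            rw [e]; abel
          have hz : x.2 (i + 1) + y i - s • y (i + 1) = 0 :=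
            hpow (i + 1) (by simpa using key)
          have h3 : x.2 (i + 1) + y i = s • y (i + 1) := sub_eq_zero.mp hz
          show x.2 (i + 1) = -y i - s • (-y (i + 1))
          rw [smul_neg, sub_neg_eq_add, ← h3]
          abel
      exact Prod.ext rfl (funext fun i => (hseq i).symm)
    · rintro ⟨m, rfl⟩
      funext p
      show Submodule.Quotient.mk
        ((∑ j ∈ Finset.range (p + 1), s ^ j • (m j - s • m (j + 1))) - m 0) = 0
      rw [Submodule.Quotient.mk_eq_zero]
      have tele : (∑ j ∈ Finset.range (p + 1), s ^ j • (m j - s • m (j + 1)))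
          = m 0 - s ^ (p + 1) • m (p + 1) := by
        have e : ∀ j, s ^ j • (m j - s • m (j + 1))
            = s ^ j • m j - s ^ (j + 1) • m (j + 1) := by
          intro j; rw [smul_sub, ← mul_smul, ← pow_succ]
        simp only [e]
        simpa using Finset.sum_range_sub' (fun j => s ^ j • m j) (p + 1)
      rw [tele]
      exact ⟨-m (p + 1), by rw [smul_neg]; abel⟩
  · -- (c)
    ext x
    constructor
    · rintro ⟨m, rfl⟩ p
      show Submodule.mapQ _ _ LinearMap.id _ (Submodule.Quotient.mk _) = _
      rw [Submodule.mapQ_apply, LinearMap.id_apply]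
      show _ = Submodule.Quotient.mk ((∑ j ∈ Finset.range (p + 1), s ^ j • m.2 j) - m.1)
      rw [Submodule.Quotient.eq]
      exact ⟨m.2 (p + 1), by rw [Finset.sum_range_succ]; abel⟩
    · intro hx
      choose l hl using fun p => Submodule.Quotient.mk_surjective _ (x p)
      have hcomp : ∀ p, ∃ c : L, l (p + 1) - l p = s ^ (p + 1) • c := by
        intro p
        have hp := hx p
        rw [← hl (p + 1), ← hl p] at hp
        rw [show telProj s hnorm₁ L p (Submodule.Quotient.mk (l (p + 1)))
            = Submodule.Quotient.mk (l (p + 1)) from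
          by rw [telProj, Submodule.mapQ_apply, LinearMap.id_apply]] at hp
        rw [Submodule.Quotient.eq] at hp
        exact hp
      choose c hc using hcomp
      refine ⟨(0, fun i => Nat.rec (l 0) (fun i _ => c i) i), ?_⟩
      funext p
      rw [← hl p]
      show Submodule.Quotient.mk _ = Submodule.Quotient.mk (l p)
      congr 1
      rw [sub_zero]
      induction p with
      | zero => simp
      | succ p ih =>
        rw [Finset.sum_range_succ, ih]
        show l p + s ^ (p + 1) • c p = l (p + 1)
        rw [← hc p]
        abel
end
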